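/- Let (A, d_A) be a differential algebra of weight λ and let (M, d_M) be a differential bimodule over (A, d_A). Then the maps Φ^n form a chain map from the Hochschild cochain complex of A with coefficients in M to the cochain complex of the differential operator d_A with coefficients in M: for every n ≥ 0 and every f ∈ C^n_Alg(A, M), one has Φ^{n+1}(∂^n_Alg(f)) = ∂^n_DO(Φ^n(f)). -/
import Mathlib


/-- The Hochschild coboundary operator `∂ⁿ_Alg` (see STATEMENT 2). -/
def hochCob (k : Type*) [Field k] (A M : Type*) [NonUnitalRing A] [Module k A]
    [AddCommGroup M] [Module k M]
    (l : A →ₗ[k] M →ₗ[k] M) (r : M →ₗ[k] A →ₗ[k] M)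
    {n : ℕ} (F : (Fin n → A) → M) : (Fin (n + 1) → A) → M :=
  fun a =>
    ((-1 : ℤ) ^ (n + 1)) • l (a 0) (F (Fin.tail a))
      + (∑ i : Fin n, ((-1 : ℤ) ^ (n - (i : ℕ))) •
          F (fun j => if (j : ℕ) < (i : ℕ) then a j.castSucc
             else if (j : ℕ) = (i : ℕ) then a j.castSucc * a j.succ
             else a j.succ))
      + r (F (Fin.init a)) (a (Fin.last n))

/-- The coboundary operator `∂ⁿ_DO` of the differential operator (see STATEMENT 3). -/
def hochDOCob (k : Type*) [Field k] (lam : k) (A M : Type*) [NonUnitalRing A] [Module k A]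
    [AddCommGroup M] [Module k M]
    (l : A →ₗ[k] M →ₗ[k] M) (r : M →ₗ[k] A →ₗ[k] M) (d : A →ₗ[k] A)
    {n : ℕ} (F : (Fin n → A) → M) : (Fin (n + 1) → A) → M :=
  fun a =>
    ((-1 : ℤ) ^ (n + 1)) • l (a 0 + lam • d (a 0)) (F (Fin.tail a))
      + (∑ i : Fin n, ((-1 : ℤ) ^ (n - (i : ℕ))) •
          F (fun j => if (j : ℕ) < (i : ℕ) then a j.castSucc
             else if (j : ℕ) = (i : ℕ) then a j.castSucc * a j.succ
             else a j.succ))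
      + r (F (Fin.init a)) (a (Fin.last n) + lam • d (a (Fin.last n)))

/-- The map `Φⁿ : Cⁿ_Alg(A,M) → Cⁿ_DO(A,M)`,
`Φⁿ(f)(a₁ ⊗ ⋯ ⊗ aₙ) = Σ_{∅ ≠ S ⊆ {1,…,n}} λ^{|S|−1} f(a with d applied at positions of S)
− dM(f(a₁ ⊗ ⋯ ⊗ aₙ))`. -/
def PhiMap (k : Type*) [Field k] (lam : k) (A M : Type*) [NonUnitalRing A] [Module k A]
    [AddCommGroup M] [Module k M]
    (d : A →ₗ[k] A) (dM : M →ₗ[k] M)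
    {n : ℕ} (F : (Fin n → A) → M) : (Fin n → A) → M :=
  fun a =>
    (∑ S ∈ Finset.univ.powerset.filter (fun S : Finset (Fin n) => S.Nonempty),
        lam ^ (S.card - 1) • F (fun j => if j ∈ S then d (a j) else a j))
      - dM (F a)


set_option linter.unusedSectionVars false

section Aux

variable {k : Type*} [Field k] (lam : k)
variable {A : Type*} [NonUnitalRing A] [Module k A] [SMulCommClass k A A] [IsScalarTower k A A]
variable {M : Type*} [AddCommGroup M] [Module k M]
variable (d : A →ₗ[k] A)

/-- Apply `d` at position `j`, and `e = id + lam • d` at positions after `j`. -/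
def Tee {m : ℕ} (a : Fin m → A) (j : Fin m) : Fin m → A :=
  fun i => if i < j then a i else if i = j then d (a i) else a i + lam • d (a i)

lemma Tee_lt {m : ℕ} (a : Fin m → A) (j i : Fin m) (h : i < j) : Tee lam d a j i = a i := by
  simp [Tee, h]

lemma Tee_eq {m : ℕ} (a : Fin m → A) (j : Fin m) : Tee lam d a j j = d (a j) := by
  simp [Tee]

lemma Tee_gt {m : ℕ} (a : Fin m → A) (j i : Fin m) (h : j < i) :
    Tee lam d a j i = a i + lam • d (a i) := by
  have h1 : ¬ i < j := by omega
  have h2 : ¬ i = j := by omega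
  simp [Tee, h1, h2]

/-- telescoping identity: `f (e ∘ b) = f b + lam • ∑ⱼ f (Tee b j)` -/
lemma star {m : ℕ} (f : MultilinearMap k (fun _ : Fin m => A) M) (b : Fin m → A) :
    f (fun i => b i + lam • d (b i)) = f b + lam • ∑ j, f (Tee lam d b j) := by
  set u : ℕ → M := fun t => f (fun i : Fin m => if (i : ℕ) < t then b i else b i + lam • d (b i))
    with hu
  have key : ∀ j ∈ Finset.range m, u j - u (j+1) =
      (if h : j < m then lam • f (Tee lam d b ⟨j, h⟩) else 0) := by
    intro j hj
    have hjm : j < m := Finset.mem_range.mp hj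
    rw [dif_pos hjm]
    set w : Fin m → A := fun i : Fin m => if (i : ℕ) < j then b i else b i + lam • d (b i)
      with hw
    have e1 : u j = f (Function.update w ⟨j, hjm⟩ (b ⟨j, hjm⟩ + lam • d (b ⟨j, hjm⟩))) := by
      simp only [hu]
      congr 1
      funext i
      rcases eq_or_ne i ⟨j, hjm⟩ with rfl | hne
      · simp [hw]
      · rw [Function.update_of_ne hne]
    have e2 : u (j+1) = f (Function.update w ⟨j, hjm⟩ (b ⟨j, hjm⟩)) := by
      simp only [hu]
      congr 1
      funext i
      rcases eq_or_ne i ⟨j, hjm⟩ with rfl | hne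
      · simp
      · rw [Function.update_of_ne hne, hw]
        have : (i : ℕ) ≠ j := fun h => hne (Fin.ext h)
        by_cases hlt : (i : ℕ) < j
        · simp [hlt, Nat.lt_succ_of_lt hlt]
        · have h2 : ¬ (i : ℕ) < j + 1 := by omega
          simp [hlt, h2]
    have e3 : Tee lam d b ⟨j, hjm⟩ = Function.update w ⟨j, hjm⟩ (d (b ⟨j, hjm⟩)) := by
      funext i
      rcases eq_or_ne i ⟨j, hjm⟩ with rfl | hne
      · simp [Tee]
      · rw [Function.update_of_ne hne, hw]
        have hij : (i : ℕ) ≠ j := fun h => hne (Fin.ext h)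
        by_cases hlt : (i : ℕ) < j
        · rw [Tee_lt lam d b _ i (by simpa [Fin.lt_def] using hlt)]
          simp [hlt]
        · rw [Tee_gt lam d b _ i (by simp [Fin.lt_def]; omega)]
          simp [hlt]
    rw [e1, e2, e3, f.map_update_add, f.map_update_smul]
    abel
  have tele := Finset.sum_range_sub' u m
  rw [Finset.sum_congr rfl key] at tele
  have hsum : (∑ j ∈ Finset.range m, if h : j < m then lam • f (Tee lam d b ⟨j, h⟩) else 0)
      = lam • ∑ j, f (Tee lam d b j) := by
    rw [Finset.smul_sum,
      ← Fin.sum_univ_eq_sum_range (fun t => if h : t < m then lam • f (Tee lam d b ⟨t, h⟩) else 0)]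
    refine Finset.sum_congr rfl fun j _ => ?_
    simp [j.isLt]
  rw [hsum] at tele
  have h0 : u 0 = f (fun i => b i + lam • d (b i)) := by simp [hu]
  have hm : u m = f b := by
    simp only [hu]
    congr 1
    funext i
    simp [i.isLt]
  rw [h0, hm] at tele
  rw [tele]
  abel

lemma phi_eq {m : ℕ} (dM : M →ₗ[k] M) (f : MultilinearMap k (fun _ : Fin m => A) M)
    (a : Fin m → A) :
    PhiMap k lam A M d dM ⇑f a = (∑ j, f (Tee lam d a j)) - dM (f a) := by
  classical
  unfold PhiMap
  congr 1
  have step1 : ∀ j : Fin m, f (Tee lam d a j)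
      = ∑ t ∈ (Finset.Ioi j).powerset,
          lam ^ t.card • f (fun i => if i ∈ insert j t then d (a i) else a i) := by
    intro j
    have e0 : Tee lam d a j = (Finset.Ioi j).piecewise
        ((fun i => lam • d (a i)) + (fun i => if i = j then d (a i) else a i))
        (fun i => if i = j then d (a i) else a i) := by
      funext i
      by_cases h : i ∈ Finset.Ioi j
      · rw [Finset.piecewise_eq_of_mem _ _ _ h]
        rw [Finset.mem_Ioi] at h
        rw [Tee_gt lam d a j i h]
        have : i ≠ j := by omega
        simp [this, add_comm]
      · rw [Finset.piecewise_eq_of_notMem _ _ _ h]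
        rw [Finset.mem_Ioi] at h
        rcases eq_or_lt_of_le (le_of_not_gt h) with h1 | h1
        · rw [h1, Tee_eq]; simp
        · rw [Tee_lt lam d a j i h1]
          have : i ≠ j := by omega
          simp [this]
    rw [e0, f.map_piecewise_add]
    refine Finset.sum_congr rfl fun t ht => ?_
    rw [Finset.mem_powerset] at ht
    have hjt : j ∉ t := fun hc => by simpa using Finset.mem_Ioi.mp (ht hc)
    have e1 : t.piecewise (fun i => lam • d (a i)) (fun i => if i = j then d (a i) else a i)
        = t.piecewise (fun i => lam • (fun i' => if i' ∈ insert j t then d (a i') else a i') i)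
          (fun i' => if i' ∈ insert j t then d (a i') else a i') := by
      funext i
      by_cases h : i ∈ t
      · rw [Finset.piecewise_eq_of_mem _ _ _ h, Finset.piecewise_eq_of_mem _ _ _ h]
        simp [Finset.mem_insert, h]
      · rw [Finset.piecewise_eq_of_notMem _ _ _ h, Finset.piecewise_eq_of_notMem _ _ _ h]
        rcases eq_or_ne i j with rfl | hij
        · simp
        · simp [hij, h]
    rw [e1, f.map_piecewise_smul]
    simp
  rw [show (∑ j, f (Tee lam d a j)) = ∑ p ∈ Finset.univ.sigma
        (fun j : Fin m => (Finset.Ioi j).powerset),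
        lam ^ p.2.card • f (fun i => if i ∈ insert p.1 p.2 then d (a i) else a i) by
      rw [Finset.sum_sigma]
      exact Finset.sum_congr rfl fun j _ => step1 j]
  refine Finset.sum_bij' (i := fun S hS => (⟨S.min' (Finset.mem_filter.mp hS).2,
      S.erase (S.min' (Finset.mem_filter.mp hS).2)⟩ : Σ _ : Fin m, Finset (Fin m)))
    (j := fun p _ => insert p.1 p.2) ?_ ?_ ?_ ?_ ?_
  · intro S hS
    have hne : S.Nonempty := by simpa using (Finset.mem_filter.mp hS).2
    rw [Finset.mem_sigma]
    refine ⟨Finset.mem_univ _, Finset.mem_powerset.mpr fun x hx => ?_⟩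
    rw [Finset.mem_Ioi]
    rcases Finset.mem_erase.mp hx with ⟨hne', hxS⟩
    exact lt_of_le_of_ne (Finset.min'_le S x hxS) (Ne.symm hne')
  · intro p hp
    simp only [Finset.mem_filter, Finset.mem_powerset]
    exact ⟨Finset.subset_univ _, Finset.insert_nonempty _ _⟩
  · intro S hS
    dsimp only
    exact Finset.insert_erase (Finset.min'_mem S _)
  · intro p hp
    rcases p with ⟨j, t⟩
    rw [Finset.mem_sigma, Finset.mem_powerset] at hp
    have hjt : j ∉ t := fun hc => by simpa using Finset.mem_Ioi.mp (hp.2 hc)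
    have hmin : ∀ (h : (insert j t).Nonempty), (insert j t).min' h = j := by
      intro h
      refine le_antisymm (Finset.min'_le _ _ (Finset.mem_insert_self _ _)) ?_
      refine Finset.le_min' _ _ _ fun y hy => ?_
      rcases Finset.mem_insert.mp hy with rfl | hy
      · exact le_refl _
      · exact le_of_lt (Finset.mem_Ioi.mp (hp.2 hy))
    dsimp only
    refine Sigma.ext (hmin (Finset.insert_nonempty _ _)) (heq_of_eq ?_)
    dsimp only
    simp only [hmin, Finset.erase_insert hjt]
  · intro S hS
    have hne : S.Nonempty := (Finset.mem_filter.mp hS).2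
    have hmem := Finset.min'_mem S hne
    dsimp only
    rw [Finset.insert_erase hmem, Finset.card_erase_of_mem hmem]





/-- The "merge at `i`" operation appearing in the Hochschild coboundary. -/
def contr {n : ℕ} (a : Fin (n+1) → A) (i : Fin n) : Fin n → A :=
  fun j => if (j : ℕ) < (i : ℕ) then a j.castSucc
    else if (j : ℕ) = (i : ℕ) then a j.castSucc * a j.succ
    else a j.succ

lemma contr_lt {n : ℕ} (a : Fin (n+1) → A) (i j : Fin n) (h : (j:ℕ) < (i:ℕ)) :
    contr a i j = a j.castSucc := by simp [contr, h]

lemma contr_eq {n : ℕ} (a : Fin (n+1) → A) (i : Fin n) :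
    contr a i i = a i.castSucc * a i.succ := by simp [contr]

lemma contr_gt {n : ℕ} (a : Fin (n+1) → A) (i j : Fin n) (h : (i:ℕ) < (j:ℕ)) :
    contr a i j = a j.succ := by
  have h1 : ¬ (j:ℕ) < (i:ℕ) := by omega
  have h2 : ¬ (j:ℕ) = (i:ℕ) := by omega
  simp [contr, h1, h2]

lemma contr_update_lt {n : ℕ} (a : Fin (n+1) → A) (i q : Fin n) (h : (q:ℕ) < (i:ℕ)) (z : A) :
    contr (Function.update a q.castSucc z) i = Function.update (contr a i) q z := by
  funext j
  rcases eq_or_ne j q with rfl | hne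
  · rw [Function.update_self, contr_lt _ _ _ h, Function.update_self]
  · rw [Function.update_of_ne hne]
    have hne' : (j:ℕ) ≠ (q:ℕ) := fun hc => hne (Fin.ext hc)
    by_cases h1 : (j:ℕ) < (i:ℕ)
    · rw [contr_lt _ _ _ h1, contr_lt _ _ _ h1,
        Function.update_of_ne (by simp [Fin.ext_iff]; omega)]
    · by_cases h2 : (j:ℕ) = (i:ℕ)
      · have h2' : ¬ (j:ℕ) < (i:ℕ) := by omega
        simp only [contr, if_neg h2', if_pos h2]
        rw [Function.update_of_ne (by simp [Fin.ext_iff]; omega),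
          Function.update_of_ne (by simp [Fin.ext_iff]; omega)]
      · have h3 : (i:ℕ) < (j:ℕ) := by omega
        rw [contr_gt _ _ _ h3, contr_gt _ _ _ h3,
          Function.update_of_ne (by simp [Fin.ext_iff]; omega)]

lemma contr_update_eq1 {n : ℕ} (a : Fin (n+1) → A) (i : Fin n) (z : A) :
    contr (Function.update a i.castSucc z) i = Function.update (contr a i) i (z * a i.succ) := by
  funext j
  rcases eq_or_ne j i with rfl | hne
  · rw [Function.update_self, contr_eq, Function.update_self,
      Function.update_of_ne (by simp [Fin.ext_iff])]
  · rw [Function.update_of_ne hne]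
    have hne' : (j:ℕ) ≠ (i:ℕ) := fun hc => hne (Fin.ext hc)
    by_cases h1 : (j:ℕ) < (i:ℕ)
    · rw [contr_lt _ _ _ h1, contr_lt _ _ _ h1,
        Function.update_of_ne (by simp [Fin.ext_iff]; omega)]
    · have h3 : (i:ℕ) < (j:ℕ) := by omega
      rw [contr_gt _ _ _ h3, contr_gt _ _ _ h3,
        Function.update_of_ne (by simp [Fin.ext_iff]; omega)]

lemma contr_update_eq2 {n : ℕ} (a : Fin (n+1) → A) (i : Fin n) (z : A) :
    contr (Function.update a i.succ z) i = Function.update (contr a i) i (a i.castSucc * z) := by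
  funext j
  rcases eq_or_ne j i with rfl | hne
  · rw [Function.update_self, contr_eq, Function.update_self,
      Function.update_of_ne (by simp [Fin.ext_iff])]
  · rw [Function.update_of_ne hne]
    have hne' : (j:ℕ) ≠ (i:ℕ) := fun hc => hne (Fin.ext hc)
    by_cases h1 : (j:ℕ) < (i:ℕ)
    · rw [contr_lt _ _ _ h1, contr_lt _ _ _ h1,
        Function.update_of_ne (by simp [Fin.ext_iff]; omega)]
    · have h3 : (i:ℕ) < (j:ℕ) := by omega
      rw [contr_gt _ _ _ h3, contr_gt _ _ _ h3,
        Function.update_of_ne (by simp [Fin.ext_iff]; omega)]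

lemma contr_update_gt {n : ℕ} (a : Fin (n+1) → A) (i q : Fin n) (h : (i:ℕ) < (q:ℕ)) (z : A) :
    contr (Function.update a q.succ z) i = Function.update (contr a i) q z := by
  funext j
  rcases eq_or_ne j q with rfl | hne
  · rw [Function.update_self, contr_gt _ _ _ h, Function.update_self]
  · rw [Function.update_of_ne hne]
    have hne' : (j:ℕ) ≠ (q:ℕ) := fun hc => hne (Fin.ext hc)
    by_cases h1 : (j:ℕ) < (i:ℕ)
    · rw [contr_lt _ _ _ h1, contr_lt _ _ _ h1,
        Function.update_of_ne (by simp [Fin.ext_iff]; omega)]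
    · by_cases h2 : (j:ℕ) = (i:ℕ)
      · have h2' : ¬ (j:ℕ) < (i:ℕ) := by omega
        simp only [contr, if_neg h2', if_pos h2]
        rw [Function.update_of_ne (by simp [Fin.ext_iff]; omega),
          Function.update_of_ne (by simp [Fin.ext_iff]; omega)]
      · have h3 : (i:ℕ) < (j:ℕ) := by omega
        rw [contr_gt _ _ _ h3, contr_gt _ _ _ h3,
          Function.update_of_ne (by simp [Fin.ext_iff]; omega)]

/-- Summing over `Fin (n+1)` where two consecutive terms merge. -/
lemma merge_sum {n : ℕ} (g : Fin (n+1) → M) (h : Fin n → M) (i : Fin n)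
    (h1 : ∀ j : Fin n, (j:ℕ) < (i:ℕ) → g j.castSucc = h j)
    (h2 : g i.castSucc + g i.succ = h i)
    (h3 : ∀ j : Fin n, (i:ℕ) < (j:ℕ) → g j.succ = h j) :
    ∑ j, g j = ∑ j, h j := by
  classical
  rw [Fin.sum_univ_succAbove g i.castSucc,
    ← Finset.add_sum_erase _ (fun j => g (i.castSucc.succAbove j)) (Finset.mem_univ i),
    ← Finset.add_sum_erase _ h (Finset.mem_univ i)]
  have e1 : i.castSucc.succAbove i = i.succ :=
    Fin.succAbove_of_le_castSucc _ _ (le_refl _)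
  rw [e1, ← add_assoc, h2]
  congr 1
  refine Finset.sum_congr rfl fun j hj => ?_
  have hji : (j:ℕ) ≠ (i:ℕ) := fun hc => (Finset.mem_erase.mp hj).1 (Fin.ext hc)
  rcases Nat.lt_or_ge (j:ℕ) (i:ℕ) with hlt | hge
  · rw [Fin.succAbove_of_castSucc_lt _ _ (by rw [Fin.castSucc_lt_castSucc_iff, Fin.lt_def]; omega)]
    exact h1 j hlt
  · have hgt : (i:ℕ) < (j:ℕ) := by omega
    rw [Fin.succAbove_of_le_castSucc _ _ (by rw [Fin.castSucc_le_castSucc_iff, Fin.le_def]; omega)]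
    exact h3 j hgt

variable (l : A →ₗ[k] M →ₗ[k] M) (r : M →ₗ[k] A →ₗ[k] M)

lemma comp1_add {n : ℕ} (f : MultilinearMap k (fun _ : Fin n => A) M)
    (a : Fin (n+1) → A) (p : Fin (n+1)) (x y : A) :
    l (Function.update a p (x+y) 0) (f (Fin.tail (Function.update a p (x+y))))
      = l (Function.update a p x 0) (f (Fin.tail (Function.update a p x)))
        + l (Function.update a p y 0) (f (Fin.tail (Function.update a p y))) := by
  induction p using Fin.cases with
  | zero =>
      rw [Fin.tail_update_zero, Fin.tail_update_zero, Fin.tail_update_zero,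
        Function.update_self, Function.update_self, Function.update_self,
        map_add, LinearMap.add_apply]
  | succ q =>
      rw [Fin.tail_update_succ, Fin.tail_update_succ, Fin.tail_update_succ,
        Function.update_of_ne (Fin.succ_ne_zero q).symm,
        Function.update_of_ne (Fin.succ_ne_zero q).symm,
        Function.update_of_ne (Fin.succ_ne_zero q).symm,
        f.map_update_add, map_add]

lemma comp1_smul {n : ℕ} (f : MultilinearMap k (fun _ : Fin n => A) M)
    (a : Fin (n+1) → A) (p : Fin (n+1)) (c : k) (x : A) :
    l (Function.update a p (c • x) 0) (f (Fin.tail (Function.update a p (c • x))))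
      = c • l (Function.update a p x 0) (f (Fin.tail (Function.update a p x))) := by
  induction p using Fin.cases with
  | zero =>
      rw [Fin.tail_update_zero, Fin.tail_update_zero,
        Function.update_self, Function.update_self,
        map_smul, LinearMap.smul_apply]
  | succ q =>
      rw [Fin.tail_update_succ, Fin.tail_update_succ,
        Function.update_of_ne (Fin.succ_ne_zero q).symm,
        Function.update_of_ne (Fin.succ_ne_zero q).symm,
        f.map_update_smul, map_smul]

lemma comp3_add {n : ℕ} (f : MultilinearMap k (fun _ : Fin n => A) M)
    (a : Fin (n+1) → A) (p : Fin (n+1)) (x y : A) :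
    r (f (Fin.init (Function.update a p (x+y)))) (Function.update a p (x+y) (Fin.last n))
      = r (f (Fin.init (Function.update a p x))) (Function.update a p x (Fin.last n))
        + r (f (Fin.init (Function.update a p y))) (Function.update a p y (Fin.last n)) := by
  induction p using Fin.lastCases with
  | last =>
      rw [Fin.init_update_last, Fin.init_update_last, Fin.init_update_last,
        Function.update_self, Function.update_self, Function.update_self,
        map_add]
  | cast q =>
      rw [Fin.init_update_castSucc, Fin.init_update_castSucc, Fin.init_update_castSucc,
        Function.update_of_ne (Fin.castSucc_lt_last q).ne',
        Function.update_of_ne (Fin.castSucc_lt_last q).ne',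
        Function.update_of_ne (Fin.castSucc_lt_last q).ne',
        f.map_update_add, map_add, LinearMap.add_apply]

lemma comp3_smul {n : ℕ} (f : MultilinearMap k (fun _ : Fin n => A) M)
    (a : Fin (n+1) → A) (p : Fin (n+1)) (c : k) (x : A) :
    r (f (Fin.init (Function.update a p (c • x)))) (Function.update a p (c • x) (Fin.last n))
      = c • r (f (Fin.init (Function.update a p x))) (Function.update a p x (Fin.last n)) := by
  induction p using Fin.lastCases with
  | last =>
      rw [Fin.init_update_last, Fin.init_update_last,
        Function.update_self, Function.update_self,
        map_smul]
  | cast q =>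
      rw [Fin.init_update_castSucc, Fin.init_update_castSucc,
        Function.update_of_ne (Fin.castSucc_lt_last q).ne',
        Function.update_of_ne (Fin.castSucc_lt_last q).ne',
        f.map_update_smul, map_smul, LinearMap.smul_apply]

lemma comp2_add {n : ℕ} (f : MultilinearMap k (fun _ : Fin n => A) M) (i : Fin n)
    (a : Fin (n+1) → A) (p : Fin (n+1)) (x y : A) :
    f (contr (Function.update a p (x+y)) i)
      = f (contr (Function.update a p x) i) + f (contr (Function.update a p y) i) := by
  rcases Nat.lt_trichotomy (p:ℕ) (i:ℕ) with hpi | hpi | hpi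
  · set q : Fin n := ⟨(p:ℕ), by omega⟩ with hq
    have hp : p = q.castSucc := Fin.ext (by simp [hq])
    rw [hp, contr_update_lt a i q hpi, contr_update_lt a i q hpi,
      contr_update_lt a i q hpi, f.map_update_add]
  · have hp : p = i.castSucc := Fin.ext (by simp [hpi])
    rw [hp, contr_update_eq1, contr_update_eq1, contr_update_eq1, add_mul, f.map_update_add]
  · by_cases hpi2 : (p:ℕ) = (i:ℕ) + 1
    · have hp : p = i.succ := Fin.ext (by simp [hpi2])
      rw [hp, contr_update_eq2, contr_update_eq2, contr_update_eq2, mul_add, f.map_update_add]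
    · set q : Fin n := ⟨(p:ℕ) - 1, by omega⟩ with hq
      have hp : p = q.succ := Fin.ext (by simp [hq]; omega)
      have hiq : (i:ℕ) < (q:ℕ) := by simp [hq]; omega
      rw [hp, contr_update_gt a i q hiq, contr_update_gt a i q hiq,
        contr_update_gt a i q hiq, f.map_update_add]

lemma comp2_smul {n : ℕ} (f : MultilinearMap k (fun _ : Fin n => A) M) (i : Fin n)
    (a : Fin (n+1) → A) (p : Fin (n+1)) (c : k) (x : A) :
    f (contr (Function.update a p (c • x)) i)
      = c • f (contr (Function.update a p x) i) := by
  rcases Nat.lt_trichotomy (p:ℕ) (i:ℕ) with hpi | hpi | hpi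
  · set q : Fin n := ⟨(p:ℕ), by omega⟩ with hq
    have hp : p = q.castSucc := Fin.ext (by simp [hq])
    rw [hp, contr_update_lt a i q hpi, contr_update_lt a i q hpi, f.map_update_smul]
  · have hp : p = i.castSucc := Fin.ext (by simp [hpi])
    rw [hp, contr_update_eq1, contr_update_eq1, smul_mul_assoc, f.map_update_smul]
  · by_cases hpi2 : (p:ℕ) = (i:ℕ) + 1
    · have hp : p = i.succ := Fin.ext (by simp [hpi2])
      rw [hp, contr_update_eq2, contr_update_eq2, mul_smul_comm, f.map_update_smul]
    · set q : Fin n := ⟨(p:ℕ) - 1, by omega⟩ with hq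
      have hp : p = q.succ := Fin.ext (by simp [hq]; omega)
      have hiq : (i:ℕ) < (q:ℕ) := by simp [hq]; omega
      rw [hp, contr_update_gt a i q hiq, contr_update_gt a i q hiq, f.map_update_smul]

lemma hochCob_apply {n : ℕ} (F : (Fin n → A) → M) (a : Fin (n+1) → A) :
    hochCob k A M l r F a
      = ((-1 : ℤ) ^ (n + 1)) • l (a 0) (F (Fin.tail a))
        + (∑ i : Fin n, ((-1 : ℤ) ^ (n - (i : ℕ))) • F (contr a i))
        + r (F (Fin.init a)) (a (Fin.last n)) := rfl

/-- The Hochschild coboundary of a multilinear map, as a multilinear map. -/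
def cobML {n : ℕ} (f : MultilinearMap k (fun _ : Fin n => A) M) :
    MultilinearMap k (fun _ : Fin (n+1) => A) M where
  toFun := hochCob k A M l r ⇑f
  map_update_add' := by
    intro inst a p x y
    obtain rfl : inst = instDecidableEqFin (n+1) := Subsingleton.elim _ _
    rw [hochCob_apply, hochCob_apply, hochCob_apply,
      comp1_add l f a p x y, comp3_add r f a p x y]
    have hmid : ∀ i : Fin n,
        ((-1 : ℤ) ^ (n - (i : ℕ))) • f (contr (Function.update a p (x+y)) i)
          = ((-1 : ℤ) ^ (n - (i : ℕ))) • f (contr (Function.update a p x) i)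
            + ((-1 : ℤ) ^ (n - (i : ℕ))) • f (contr (Function.update a p y) i) := by
      intro i
      rw [comp2_add f i a p x y, smul_add]
    rw [Finset.sum_congr rfl (fun i _ => hmid i), Finset.sum_add_distrib, smul_add]
    abel
  map_update_smul' := by
    intro inst a p c x
    obtain rfl : inst = instDecidableEqFin (n+1) := Subsingleton.elim _ _
    rw [hochCob_apply, hochCob_apply,
      comp1_smul l f a p c x, comp3_smul r f a p c x]
    have hmid : ∀ i : Fin n,
        ((-1 : ℤ) ^ (n - (i : ℕ))) • f (contr (Function.update a p (c • x)) i)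
          = c • (((-1 : ℤ) ^ (n - (i : ℕ))) • f (contr (Function.update a p x) i)) := by
      intro i
      rw [comp2_smul f i a p c x, smul_comm]
    rw [Finset.sum_congr rfl (fun i _ => hmid i), ← Finset.smul_sum,
      smul_comm ((-1 : ℤ)^(n+1)) c, smul_add, smul_add]


section Interact

variable {n : ℕ}

lemma e_mul (hd : ∀ u v : A, d (u * v) = d u * v + u * d v + lam • (d u * d v)) (u v : A) :
    u * v + lam • d (u * v) = (u + lam • d u) * (v + lam • d v) := by
  rw [hd, mul_add, add_mul, add_mul, smul_mul_assoc, smul_mul_assoc, mul_smul_comm,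
    mul_smul_comm, smul_add, smul_add]
  abel

lemma tail_Tee_zero (a : Fin (n+1) → A) :
    Fin.tail (Tee lam d a 0) = fun i => Fin.tail a i + lam • d (Fin.tail a i) := by
  funext i
  show Tee lam d a 0 i.succ = _
  rw [Tee_gt lam d a 0 i.succ (i.succ_pos)]
  rfl

lemma Tee_succ_zero (a : Fin (n+1) → A) (j : Fin n) : Tee lam d a j.succ 0 = a 0 := by
  rw [Tee_lt lam d a j.succ 0 (j.succ_pos)]

lemma tail_Tee_succ (a : Fin (n+1) → A) (j : Fin n) :
    Fin.tail (Tee lam d a j.succ) = Tee lam d (Fin.tail a) j := by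
  funext i
  show Tee lam d a j.succ i.succ = Tee lam d (Fin.tail a) j i
  rcases Nat.lt_trichotomy (i:ℕ) (j:ℕ) with h | h | h
  · rw [Tee_lt lam d a j.succ i.succ
      (by simp only [Fin.lt_def, Fin.val_succ]; omega),
      Tee_lt lam d (Fin.tail a) j i (by simp only [Fin.lt_def]; omega)]
    rfl
  · have : i = j := Fin.ext h
    subst this
    rw [Tee_eq, Tee_eq]
    rfl
  · rw [Tee_gt lam d a j.succ i.succ
      (by simp only [Fin.lt_def, Fin.val_succ]; omega),
      Tee_gt lam d (Fin.tail a) j i (by simp only [Fin.lt_def]; omega)]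
    rfl

lemma Tee_castSucc_last (a : Fin (n+1) → A) (j : Fin n) :
    Tee lam d a j.castSucc (Fin.last n) = a (Fin.last n) + lam • d (a (Fin.last n)) := by
  rw [Tee_gt lam d a j.castSucc (Fin.last n) (Fin.castSucc_lt_last j)]

lemma init_Tee_last (a : Fin (n+1) → A) :
    Fin.init (Tee lam d a (Fin.last n)) = Fin.init a := by
  funext i
  show Tee lam d a (Fin.last n) i.castSucc = a i.castSucc
  rw [Tee_lt lam d a (Fin.last n) i.castSucc (Fin.castSucc_lt_last i)]

lemma init_Tee_castSucc (a : Fin (n+1) → A) (j : Fin n) :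
    Fin.init (Tee lam d a j.castSucc) = Tee lam d (Fin.init a) j := by
  funext i
  show Tee lam d a j.castSucc i.castSucc = Tee lam d (Fin.init a) j i
  rcases Nat.lt_trichotomy (i:ℕ) (j:ℕ) with h | h | h
  · rw [Tee_lt lam d a j.castSucc i.castSucc
      (by simp only [Fin.lt_def, Fin.coe_castSucc]; omega),
      Tee_lt lam d (Fin.init a) j i (by simp only [Fin.lt_def]; omega)]
    rfl
  · have : i = j := Fin.ext h
    subst this
    rw [Tee_eq, Tee_eq]
    rfl
  · rw [Tee_gt lam d a j.castSucc i.castSucc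
      (by simp only [Fin.lt_def, Fin.coe_castSucc]; omega),
      Tee_gt lam d (Fin.init a) j i (by simp only [Fin.lt_def]; omega)]
    rfl

lemma contr_Tee_lt (hd : ∀ u v : A, d (u * v) = d u * v + u * d v + lam • (d u * d v))
    (a : Fin (n+1) → A) (i j : Fin n) (h : (j:ℕ) < (i:ℕ)) :
    contr (Tee lam d a j.castSucc) i = Tee lam d (contr a i) j := by
  funext j'
  rcases Nat.lt_trichotomy (j':ℕ) (i:ℕ) with h1 | h1 | h1
  · -- j' < i : LHS = Tee a j.castSucc at j'.castSucc
    rw [contr_lt _ _ _ h1]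
    rcases Nat.lt_trichotomy (j':ℕ) (j:ℕ) with h2 | h2 | h2
    · rw [Tee_lt lam d a j.castSucc j'.castSucc
        (by simp only [Fin.lt_def, Fin.coe_castSucc]; omega),
        Tee_lt lam d (contr a i) j j' (by simp only [Fin.lt_def]; omega),
        contr_lt _ _ _ h1]
    · have : j' = j := Fin.ext h2
      subst this
      rw [Tee_eq, Tee_eq, contr_lt _ _ _ h1]
    · rw [Tee_gt lam d a j.castSucc j'.castSucc
        (by simp only [Fin.lt_def, Fin.coe_castSucc]; omega),
        Tee_gt lam d (contr a i) j j' (by simp only [Fin.lt_def]; omega),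
        contr_lt _ _ _ h1]
  · -- j' = i : merged coordinate, uses multiplicativity of e
    have : j' = i := Fin.ext h1
    subst this
    rw [contr_eq,
      Tee_gt lam d a j.castSucc j'.castSucc
        (by simp only [Fin.lt_def, Fin.coe_castSucc]; omega),
      Tee_gt lam d a j.castSucc j'.succ
        (by simp only [Fin.lt_def, Fin.coe_castSucc, Fin.val_succ]; omega),
      Tee_gt lam d (contr a j') j j' (by simp only [Fin.lt_def]; omega),
      contr_eq, e_mul lam d hd]
  · -- j' > i
    rw [contr_gt _ _ _ h1,
      Tee_gt lam d a j.castSucc j'.succ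
        (by simp only [Fin.lt_def, Fin.coe_castSucc, Fin.val_succ]; omega),
      Tee_gt lam d (contr a i) j j' (by simp only [Fin.lt_def]; omega),
      contr_gt _ _ _ h1]

lemma contr_Tee_gt (a : Fin (n+1) → A) (i j : Fin n) (h : (i:ℕ) < (j:ℕ)) :
    contr (Tee lam d a j.succ) i = Tee lam d (contr a i) j := by
  funext j'
  rcases Nat.lt_trichotomy (j':ℕ) (i:ℕ) with h1 | h1 | h1
  · rw [contr_lt _ _ _ h1,
      Tee_lt lam d a j.succ j'.castSucc
        (by simp only [Fin.lt_def, Fin.coe_castSucc, Fin.val_succ]; omega),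
      Tee_lt lam d (contr a i) j j' (by simp only [Fin.lt_def]; omega),
      contr_lt _ _ _ h1]
  · have : j' = i := Fin.ext h1
    subst this
    rw [contr_eq,
      Tee_lt lam d a j.succ j'.castSucc
        (by simp only [Fin.lt_def, Fin.coe_castSucc, Fin.val_succ]; omega),
      Tee_lt lam d a j.succ j'.succ
        (by simp only [Fin.lt_def, Fin.val_succ]; omega),
      Tee_lt lam d (contr a j') j j' (by simp only [Fin.lt_def]; omega),
      contr_eq]
  · rcases Nat.lt_trichotomy (j':ℕ) (j:ℕ) with h2 | h2 | h2
    · rw [contr_gt _ _ _ h1,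
        Tee_lt lam d a j.succ j'.succ (by simp only [Fin.lt_def, Fin.val_succ]; omega),
        Tee_lt lam d (contr a i) j j' (by simp only [Fin.lt_def]; omega),
        contr_gt _ _ _ h1]
    · have : j' = j := Fin.ext h2
      subst this
      rw [contr_gt _ _ _ h1, Tee_eq, Tee_eq, contr_gt _ _ _ h1]
    · rw [contr_gt _ _ _ h1,
        Tee_gt lam d a j.succ j'.succ (by simp only [Fin.lt_def, Fin.val_succ]; omega),
        Tee_gt lam d (contr a i) j j' (by simp only [Fin.lt_def]; omega),
        contr_gt _ _ _ h1]

lemma contr_Tee_mid (hd : ∀ u v : A, d (u * v) = d u * v + u * d v + lam • (d u * d v))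
    (f : MultilinearMap k (fun _ : Fin n => A) M) (a : Fin (n+1) → A) (i : Fin n) :
    f (contr (Tee lam d a i.castSucc) i) + f (contr (Tee lam d a i.succ) i)
      = f (Tee lam d (contr a i) i) := by
  classical
  have h1 : contr (Tee lam d a i.castSucc) i
      = Function.update (Tee lam d (contr a i) i) i
          (d (a i.castSucc) * (a i.succ + lam • d (a i.succ))) := by
    funext j'
    rcases eq_or_ne j' i with rfl | hne
    · rw [Function.update_self, contr_eq, Tee_eq,
        Tee_gt lam d a j'.castSucc j'.succ
          (by simp only [Fin.lt_def, Fin.coe_castSucc, Fin.val_succ]; omega)]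
    · rw [Function.update_of_ne hne]
      have hne' : (j':ℕ) ≠ (i:ℕ) := fun hc => hne (Fin.ext hc)
      rcases Nat.lt_or_ge (j':ℕ) (i:ℕ) with h2 | h2
      · rw [contr_lt _ _ _ h2,
          Tee_lt lam d a i.castSucc j'.castSucc
            (by simp only [Fin.lt_def, Fin.coe_castSucc]; omega),
          Tee_lt lam d (contr a i) i j' (by simp only [Fin.lt_def]; omega),
          contr_lt _ _ _ h2]
      · have h3 : (i:ℕ) < (j':ℕ) := by omega
        rw [contr_gt _ _ _ h3,
          Tee_gt lam d a i.castSucc j'.succ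
            (by simp only [Fin.lt_def, Fin.coe_castSucc, Fin.val_succ]; omega),
          Tee_gt lam d (contr a i) i j' (by simp only [Fin.lt_def]; omega),
          contr_gt _ _ _ h3]
  have h2 : contr (Tee lam d a i.succ) i
      = Function.update (Tee lam d (contr a i) i) i (a i.castSucc * d (a i.succ)) := by
    funext j'
    rcases eq_or_ne j' i with rfl | hne
    · rw [Function.update_self, contr_eq,
        Tee_lt lam d a j'.succ j'.castSucc
          (by simp only [Fin.lt_def, Fin.coe_castSucc, Fin.val_succ]; omega),
        Tee_eq]
    · rw [Function.update_of_ne hne]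
      have hne' : (j':ℕ) ≠ (i:ℕ) := fun hc => hne (Fin.ext hc)
      rcases Nat.lt_or_ge (j':ℕ) (i:ℕ) with h3 | h3
      · rw [contr_lt _ _ _ h3,
          Tee_lt lam d a i.succ j'.castSucc
            (by simp only [Fin.lt_def, Fin.coe_castSucc, Fin.val_succ]; omega),
          Tee_lt lam d (contr a i) i j' (by simp only [Fin.lt_def]; omega),
          contr_lt _ _ _ h3]
      · have h4 : (i:ℕ) < (j':ℕ) := by omega
        rw [contr_gt _ _ _ h4,
          Tee_gt lam d a i.succ j'.succ
            (by simp only [Fin.lt_def, Fin.val_succ]; omega),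
          Tee_gt lam d (contr a i) i j' (by simp only [Fin.lt_def]; omega),
          contr_gt _ _ _ h4]
  have hval : d (a i.castSucc) * (a i.succ + lam • d (a i.succ)) + a i.castSucc * d (a i.succ)
      = d (a i.castSucc * a i.succ) := by
    rw [hd, mul_add, mul_smul_comm]
    abel
  have hB : Function.update (Tee lam d (contr a i) i) i (d (a i.castSucc * a i.succ))
      = Tee lam d (contr a i) i := by
    have : d (a i.castSucc * a i.succ) = Tee lam d (contr a i) i i := by
      rw [Tee_eq, contr_eq]
    rw [this, Function.update_eq_self]
  rw [h1, h2, ← f.map_update_add, hval, hB]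

end Interact


end Aux

set_option maxHeartbeats 2000000 in
/-- The maps `Φⁿ` form a chain map from the Hochschild cochain complex of `A`
with coefficients in `M` to the cochain complex of the differential operator `d`:
`Φ^{n+1}(∂ⁿ_Alg f) = ∂ⁿ_DO(Φⁿ f)`. -/
theorem stmt4 (k : Type*) [Field k] [CharZero k] (lam : k)
    (A : Type*) [NonUnitalRing A] [Module k A]
    [SMulCommClass k A A] [IsScalarTower k A A]
    (M : Type*) [AddCommGroup M] [Module k M]
    (l : A →ₗ[k] M →ₗ[k] M) (r : M →ₗ[k] A →ₗ[k] M)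
    (hl : ∀ (a b : A) (x : M), l (a * b) x = l a (l b x))
    (hr : ∀ (a b : A) (x : M), r (r x a) b = r x (a * b))
    (hlr : ∀ (a b : A) (x : M), r (l a x) b = l a (r x b))
    (d : A →ₗ[k] A)
    (hd : ∀ u v : A, d (u * v) = d u * v + u * d v + lam • (d u * d v))
    (dM : M →ₗ[k] M)
    (hdl : ∀ (a : A) (x : M), dM (l a x) = l (d a) x + l a (dM x) + lam • l (d a) (dM x))
    (hdr : ∀ (a : A) (x : M), dM (r x a) = r x (d a) + r (dM x) a + lam • r (dM x) (d a))
    (n : ℕ) (f : MultilinearMap k (fun _ : Fin n => A) M) :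
    PhiMap k lam A M d dM (hochCob k A M l r ⇑f)
      = hochDOCob k lam A M l r d (PhiMap k lam A M d dM ⇑f) := by
    classical
  funext a
  have hL : hochCob k A M l r ⇑f = ⇑(cobML l r f) := rfl
  rw [hL, phi_eq lam d dM (cobML l r f) a]
  have cob_apply : ∀ b : Fin (n+1) → A, (cobML l r f) b
      = ((-1 : ℤ) ^ (n + 1)) • l (b 0) (f (Fin.tail b))
        + (∑ i : Fin n, ((-1 : ℤ) ^ (n - (i : ℕ))) • f (contr b i))
        + r (f (Fin.init b)) (b (Fin.last n)) := fun b => rfl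
  have do_apply : hochDOCob k lam A M l r d (PhiMap k lam A M d dM ⇑f) a
      = ((-1 : ℤ) ^ (n + 1)) • l (a 0 + lam • d (a 0)) (PhiMap k lam A M d dM ⇑f (Fin.tail a))
        + (∑ i : Fin n, ((-1 : ℤ) ^ (n - (i : ℕ))) • PhiMap k lam A M d dM ⇑f (contr a i))
        + r (PhiMap k lam A M d dM ⇑f (Fin.init a))
            (a (Fin.last n) + lam • d (a (Fin.last n))) := rfl
  rw [do_apply]
  simp only [cob_apply, phi_eq lam d dM f]
  rw [Finset.sum_add_distrib, Finset.sum_add_distrib]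
  have hG1 : (∑ j : Fin (n+1),
        ((-1:ℤ)^(n+1)) • l (Tee lam d a j 0) (f (Fin.tail (Tee lam d a j))))
      = ((-1:ℤ)^(n+1)) • l (d (a 0))
          (f (Fin.tail a) + lam • ∑ j : Fin n, f (Tee lam d (Fin.tail a) j))
        + ((-1:ℤ)^(n+1)) • l (a 0) (∑ j : Fin n, f (Tee lam d (Fin.tail a) j)) := by
    rw [Fin.sum_univ_succ]
    congr 1
    · rw [Tee_eq, tail_Tee_zero, star lam d f (Fin.tail a)]
    · have h : ∀ j : Fin n,
          ((-1:ℤ)^(n+1)) • l (Tee lam d a j.succ 0) (f (Fin.tail (Tee lam d a j.succ)))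
            = ((-1:ℤ)^(n+1)) • l (a 0) (f (Tee lam d (Fin.tail a) j)) := by
        intro j; rw [Tee_succ_zero, tail_Tee_succ]
      rw [Finset.sum_congr rfl fun j _ => h j, ← Finset.smul_sum,
        ← map_sum (l (a 0)) (fun j : Fin n => f (Tee lam d (Fin.tail a) j)) Finset.univ]
  have hG2 : (∑ j : Fin (n+1), ∑ i : Fin n,
        ((-1:ℤ)^(n - (i:ℕ))) • f (contr (Tee lam d a j) i))
      = ∑ i : Fin n, ((-1:ℤ)^(n - (i:ℕ))) • ∑ jj : Fin n, f (Tee lam d (contr a i) jj) := by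
    rw [Finset.sum_comm]
    refine Finset.sum_congr rfl fun i _ => ?_
    rw [← Finset.smul_sum]
    congr 1
    exact merge_sum (fun j => f (contr (Tee lam d a j) i))
      (fun jj => f (Tee lam d (contr a i) jj)) i
      (fun j hj => congrArg f (contr_Tee_lt lam d hd a i j hj))
      (contr_Tee_mid lam d hd f a i)
      (fun j hj => congrArg f (contr_Tee_gt lam d a i j hj))
  have hG3 : (∑ j : Fin (n+1), r (f (Fin.init (Tee lam d a j))) (Tee lam d a j (Fin.last n)))
      = r (∑ j : Fin n, f (Tee lam d (Fin.init a) j))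
          (a (Fin.last n) + lam • d (a (Fin.last n)))
        + r (f (Fin.init a)) (d (a (Fin.last n))) := by
    rw [Fin.sum_univ_castSucc]
    congr 1
    · have h : ∀ j : Fin n,
          r (f (Fin.init (Tee lam d a j.castSucc))) (Tee lam d a j.castSucc (Fin.last n))
            = r (f (Tee lam d (Fin.init a) j)) (a (Fin.last n) + lam • d (a (Fin.last n))) := by
        intro j; rw [init_Tee_castSucc, Tee_castSucc_last]
      have h2 : r (∑ j : Fin n, f (Tee lam d (Fin.init a) j))
            (a (Fin.last n) + lam • d (a (Fin.last n)))
          = ∑ j : Fin n, r (f (Tee lam d (Fin.init a) j))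
              (a (Fin.last n) + lam • d (a (Fin.last n))) := by
        rw [map_sum, LinearMap.sum_apply]
      rw [Finset.sum_congr rfl fun j _ => h j, ← h2]
    · rw [init_Tee_last, Tee_eq]
  rw [hG1, hG2, hG3]
  have hdM : dM (((-1:ℤ)^(n+1)) • l (a 0) (f (Fin.tail a))
        + (∑ i : Fin n, ((-1:ℤ)^(n - (i:ℕ))) • f (contr a i))
        + r (f (Fin.init a)) (a (Fin.last n)))
      = ((-1:ℤ)^(n+1)) • dM (l (a 0) (f (Fin.tail a)))
        + (∑ i : Fin n, ((-1:ℤ)^(n - (i:ℕ))) • dM (f (contr a i)))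
        + dM (r (f (Fin.init a)) (a (Fin.last n))) := by
    simp only [map_add, map_zsmul, map_sum]
  rw [hdM, hdl (a 0) (f (Fin.tail a)), hdr (a (Fin.last n)) (f (Fin.init a))]
  simp only [map_add, map_sub, map_smul, smul_add, smul_sub,
    LinearMap.add_apply, LinearMap.sub_apply, LinearMap.smul_apply, Finset.sum_sub_distrib]
  abel
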